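/- arXiv:1206.0500 — 2 statements merged into one kernel-verified Lean document; each statement's English description precedes it below -/
import Mathlib

section
/- For the length-3 binary hidden Markov model with hidden parameters (a₀,b,c₀,u,v₀) and birational parameters a = a₀v₀, c = c₀v₀, v = v₀², the moments satisfy: m₁ = a+u, m₂ = ab+c+u, m₃ = ab²+bc+c+u, m₁₂ = abu+ac+au+cu+u²+bv, m₁₃ = ab²u+abc+bcu+b²v+ac+au+cu+u², m₂₃ = ab²u+abc+abu+bcu+c²+2cu+u²+bv, and m₁₂₃ = ab²u²+2abcu+abu²+bcu²+b²uv+ac²+2acu+c²u+au²+2cu²+u³+abv+bcv+2buv. -/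
open Matrix

/-- `π = ½(1−a₀, 1+a₀)`. -/
noncomputable def piPar (a₀ : ℂ) : Fin 2 → ℂ := ![(1 - a₀) / 2, (1 + a₀) / 2]

/-- `T = ½[[1+b−c₀, 1−b+c₀],[1−b−c₀, 1+b+c₀]]`. -/
noncomputable def TPar (b c₀ : ℂ) : Matrix (Fin 2) (Fin 2) ℂ :=
  !![(1 + b - c₀) / 2, (1 - b + c₀) / 2; (1 - b - c₀) / 2, (1 + b + c₀) / 2]

/-- `E = [[1−u+v₀, u−v₀],[1−u−v₀, u+v₀]]`. -/
noncomputable def EPar (u v₀ : ℂ) : Matrix (Fin 2) (Fin 2) ℂ :=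
  !![1 - u + v₀, u - v₀; 1 - u - v₀, u + v₀]

/-- `M χ`: `M 0 = T` and `M 1 = P₁` where `(P₁) j k = E j 1 * T j k`. -/
noncomputable def Mχ (b c₀ u v₀ : ℂ) : Fin 2 → Matrix (Fin 2) (Fin 2) ℂ
  | 0 => TPar b c₀
  | 1 => Matrix.of fun j k => EPar u v₀ j 1 * TPar b c₀ j k

/-- `M₂ = 𝟙π`. -/
noncomputable def M2 (a₀ : ℂ) : Matrix (Fin 2) (Fin 2) ℂ :=
  Matrix.of fun _ j => piPar a₀ j

/-- Moment `m_I = tr(M₂ M_{χ₁} M_{χ₂} M_{χ₃})` of the length-3 binary HMM, where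
`χᵢ = 1` iff `i ∈ I`. -/
noncomputable def mom (a₀ b c₀ u v₀ : ℂ) (χ₁ χ₂ χ₃ : Fin 2) : ℂ :=
  Matrix.trace (M2 a₀ * Mχ b c₀ u v₀ χ₁ * Mχ b c₀ u v₀ χ₂ * Mχ b c₀ u v₀ χ₃)

/-- The length-3 moments in terms of the birational parameters
`a = a₀v₀`, `c = c₀v₀`, `v = v₀²`. -/
theorem moments_length3 (a₀ b c₀ u v₀ a c v : ℂ)
    (ha : a = a₀ * v₀) (hc : c = c₀ * v₀) (hv : v = v₀ ^ 2) :
    mom a₀ b c₀ u v₀ 1 0 0 = a + u ∧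
    mom a₀ b c₀ u v₀ 0 1 0 = a * b + c + u ∧
    mom a₀ b c₀ u v₀ 0 0 1 = a * b ^ 2 + b * c + c + u ∧
    mom a₀ b c₀ u v₀ 1 1 0 =
      a * b * u + a * c + a * u + c * u + u ^ 2 + b * v ∧
    mom a₀ b c₀ u v₀ 1 0 1 =
      a * b ^ 2 * u + a * b * c + b * c * u + b ^ 2 * v + a * c + a * u + c * u + u ^ 2 ∧
    mom a₀ b c₀ u v₀ 0 1 1 =
      a * b ^ 2 * u + a * b * c + a * b * u + b * c * u + c ^ 2 + 2 * c * u + u ^ 2 +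
        b * v ∧
    mom a₀ b c₀ u v₀ 1 1 1 =
      a * b ^ 2 * u ^ 2 + 2 * a * b * c * u + a * b * u ^ 2 + b * c * u ^ 2 +
        b ^ 2 * u * v + a * c ^ 2 + 2 * a * c * u + c ^ 2 * u + a * u ^ 2 +
        2 * c * u ^ 2 + u ^ 3 + a * b * v + b * c * v + 2 * b * u * v := by
  subst ha hc hv
  refine ⟨?_, ?_, ?_, ?_, ?_, ?_, ?_⟩ <;>
  · simp only [mom, M2, Mχ, TPar, EPar, piPar, Matrix.trace, Matrix.diag,
      Matrix.mul_apply, Fin.sum_univ_two, Matrix.of_apply, Matrix.cons_val',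
      Matrix.cons_val_zero, Matrix.cons_val_one, Matrix.head_cons,
      Matrix.empty_val', Matrix.cons_val_fin_one, Matrix.head_fin_const]
    ring
end

section
/- The polynomial g = m₁₂³ − 2m₁m₁₂m₁₂₃ + m₁₂₃² · m_∅ + m₁²m₁₂₃₄ − m_∅ m₁₂ m₁₂₃₄ vanishes identically when the moments m_I are substituted by their expressions under the length-4 binary hidden Markov parametrization; i.e., g is an invariant of BHMM(4). (Here m_∅ = 1 in affine coordinates, so equivalently m₁₂³ − 2m₁m₁₂m₁₂₃ + m₁₂₃² + m₁²m₁₂₃₄ − m₁₂m₁₂₃₄ = 0 holds identically in the parameters.) -/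
open Matrix

/-- Length-4 moment `m_I = tr(M₂ M_{χ₁} M_{χ₂} M_{χ₃} M_{χ₄})`, `χᵢ = 1` iff `i ∈ I`. -/
noncomputable def mom4 (a₀ b c₀ u v₀ : ℂ) (χ₁ χ₂ χ₃ χ₄ : Fin 2) : ℂ :=
  Matrix.trace (M2 a₀ * Mχ b c₀ u v₀ χ₁ * Mχ b c₀ u v₀ χ₂ * Mχ b c₀ u v₀ χ₃ *
    Mχ b c₀ u v₀ χ₄)


private lemma mom_es (a₀ b c₀ u v₀ : ℂ) : mom4 a₀ b c₀ u v₀ 0 0 0 0 = 1 := by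
  simp only [mom4, M2, Mχ, piPar, TPar, EPar, Matrix.trace_fin_two, Matrix.mul_apply,
    Fin.sum_univ_two, Matrix.of_apply, Matrix.cons_val', Matrix.cons_val_zero,
    Matrix.cons_val_one, Matrix.head_cons, Matrix.empty_val', Matrix.cons_val_fin_one,
    Matrix.head_fin_const]
  ring

private lemma mom_1 (a₀ b c₀ u v₀ : ℂ) : mom4 a₀ b c₀ u v₀ 1 0 0 0 = u + a₀*v₀ := by
  simp only [mom4, M2, Mχ, piPar, TPar, EPar, Matrix.trace_fin_two, Matrix.mul_apply,
    Fin.sum_univ_two, Matrix.of_apply, Matrix.cons_val', Matrix.cons_val_zero,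
    Matrix.cons_val_one, Matrix.head_cons, Matrix.empty_val', Matrix.cons_val_fin_one,
    Matrix.head_fin_const]
  ring

private lemma mom_12 (a₀ b c₀ u v₀ : ℂ) : mom4 a₀ b c₀ u v₀ 1 1 0 0 =
    u^2 + c₀*u*v₀ + b*v₀^2 + a₀*u*v₀ + a₀*c₀*v₀^2 + a₀*b*u*v₀ := by
  simp only [mom4, M2, Mχ, piPar, TPar, EPar, Matrix.trace_fin_two, Matrix.mul_apply,
    Fin.sum_univ_two, Matrix.of_apply, Matrix.cons_val', Matrix.cons_val_zero,
    Matrix.cons_val_one, Matrix.head_cons, Matrix.empty_val', Matrix.cons_val_fin_one,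
    Matrix.head_fin_const]
  ring

private lemma mom_123 (a₀ b c₀ u v₀ : ℂ) : mom4 a₀ b c₀ u v₀ 1 1 1 0 =
    u^3 + 2*c₀*u^2*v₀ + c₀^2*u*v₀^2 + 2*b*u*v₀^2 + b*c₀*v₀^3 + b*c₀*u^2*v₀ + b^2*u*v₀^2
    + a₀*u^2*v₀ + 2*a₀*c₀*u*v₀^2 + a₀*c₀^2*v₀^3 + a₀*b*v₀^3 + a₀*b*u^2*v₀
    + 2*a₀*b*c₀*u*v₀^2 + a₀*b^2*u^2*v₀ := by
  simp only [mom4, M2, Mχ, piPar, TPar, EPar, Matrix.trace_fin_two, Matrix.mul_apply,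
    Fin.sum_univ_two, Matrix.of_apply, Matrix.cons_val', Matrix.cons_val_zero,
    Matrix.cons_val_one, Matrix.head_cons, Matrix.empty_val', Matrix.cons_val_fin_one,
    Matrix.head_fin_const]
  ring

private lemma mom_1234 (a₀ b c₀ u v₀ : ℂ) : mom4 a₀ b c₀ u v₀ 1 1 1 1 =
    u^4 + 3*c₀*u^3*v₀ + 3*c₀^2*u^2*v₀^2 + c₀^3*u*v₀^3 + 3*b*u^2*v₀^2 + 4*b*c₀*u*v₀^3
    + 2*b*c₀*u^3*v₀ + b*c₀^2*v₀^4 + 2*b*c₀^2*u^2*v₀^2 + b^2*v₀^4 + 2*b^2*u^2*v₀^2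
    + 2*b^2*c₀*u*v₀^3 + b^2*c₀*u^3*v₀ + b^3*u^2*v₀^2 + a₀*u^3*v₀ + 3*a₀*c₀*u^2*v₀^2
    + 3*a₀*c₀^2*u*v₀^3 + a₀*c₀^3*v₀^4 + 2*a₀*b*u*v₀^3 + a₀*b*u^3*v₀ + 2*a₀*b*c₀*v₀^4
    + 4*a₀*b*c₀*u^2*v₀^2 + 3*a₀*b*c₀^2*u*v₀^3 + 2*a₀*b^2*u*v₀^3 + a₀*b^2*u^3*v₀
    + 3*a₀*b^2*c₀*u^2*v₀^2 + a₀*b^3*u^3*v₀ := by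
  simp only [mom4, M2, Mχ, piPar, TPar, EPar, Matrix.trace_fin_two, Matrix.mul_apply,
    Fin.sum_univ_two, Matrix.of_apply, Matrix.cons_val', Matrix.cons_val_zero,
    Matrix.cons_val_one, Matrix.head_cons, Matrix.empty_val', Matrix.cons_val_fin_one,
    Matrix.head_fin_const]
  ring

set_option maxHeartbeats 4000000 in
/-- The cubic `g = m₁₂³ − 2m₁m₁₂m₁₂₃ + m_∅ m₁₂₃² + m₁² m₁₂₃₄ − m_∅ m₁₂ m₁₂₃₄` is an
invariant of BHMM(4): it vanishes identically under the parametrization. -/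
theorem cubic_invariant_bhmm4 (a₀ b c₀ u v₀ : ℂ) :
    let m_es := mom4 a₀ b c₀ u v₀ 0 0 0 0
    let m₁ := mom4 a₀ b c₀ u v₀ 1 0 0 0
    let m₁₂ := mom4 a₀ b c₀ u v₀ 1 1 0 0
    let m₁₂₃ := mom4 a₀ b c₀ u v₀ 1 1 1 0
    let m₁₂₃₄ := mom4 a₀ b c₀ u v₀ 1 1 1 1
    m₁₂ ^ 3 - 2 * m₁ * m₁₂ * m₁₂₃ + m₁₂₃ ^ 2 * m_es + m₁ ^ 2 * m₁₂₃₄ -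
      m_es * m₁₂ * m₁₂₃₄ = 0 := by
  simp only [mom_es, mom_1, mom_12, mom_123, mom_1234]
  ring
end
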